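/- For a tree T_m of order m ≥ 2 and complete graph K_n with n ≥ 2, max{rvc(T_m), n+2} ≤ rvcl(T_m ⋄ K_n) ≤ 2m + n − 2. -/

import Mathlib

open SimpleGraph

/-- A walk is a rainbow vertex path: it is a path and its internal vertices
receive pairwise distinct colors. -/
def IsRainbowPath {V : Type*} (G : SimpleGraph V) {k : ℕ} (c : V → Fin k)
    {u v : V} (p : G.Walk u v) : Prop :=
  p.IsPath ∧ (p.support.tail.dropLast.map c).Nodup

/-- A rainbow vertex coloring: every two vertices are joined by a rainbow vertex path. -/
def IsRVColoring {V : Type*} (G : SimpleGraph V) {k : ℕ} (c : V → Fin k) : Prop :=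
  ∀ u v : V, ∃ p : G.Walk u v, IsRainbowPath G c p

/-- The rainbow vertex connection number. -/
noncomputable def rvc {V : Type*} (G : SimpleGraph V) : ℕ :=
  sInf {k | ∃ c : V → Fin k, IsRVColoring G c}

/-- The rainbow code of a vertex: its vector of distances to the color classes. -/
noncomputable def rainbowCode {V : Type*} (G : SimpleGraph V) {k : ℕ}
    (c : V → Fin k) (v : V) : Fin k → ℕ :=
  fun i => sInf {d | ∃ w, c w = i ∧ G.dist v w = d}

/-- A locating rainbow coloring: a rainbow vertex coloring whose rainbow codes
are pairwise distinct. -/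
def IsLocatingRVColoring {V : Type*} (G : SimpleGraph V) {k : ℕ} (c : V → Fin k) : Prop :=
  IsRVColoring G c ∧ Function.Injective (rainbowCode G c)

/-- The locating rainbow connection number. -/
noncomputable def rvcl {V : Type*} (G : SimpleGraph V) : ℕ :=
  sInf {k | ∃ c : V → Fin k, IsLocatingRVColoring G c}

/-- The edge corona `G ⋄ H`: one copy of `G` together with one copy of `H`
for each edge of `G`, where both endpoints of the edge are joined to
every vertex of the corresponding copy of `H`. -/
def edgeCorona {V W : Type*} (G : SimpleGraph V) (H : SimpleGraph W) :
    SimpleGraph (V ⊕ (G.edgeSet × W)) where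
  Adj x y :=
    match x, y with
    | .inl u, .inl v => G.Adj u v
    | .inl u, .inr (e, _) => u ∈ (e : Sym2 V)
    | .inr (e, _), .inl u => u ∈ (e : Sym2 V)
    | .inr (e, w), .inr (e', w') => e = e' ∧ H.Adj w w'
  symm := by
    refine ⟨?_⟩
    rintro (u | ⟨e, w⟩) (v | ⟨e', w'⟩) h
    · exact h.symm
    · exact h
    · exact h
    · exact ⟨h.1.symm, h.2.symm⟩
  loopless := by
    refine ⟨?_⟩
    rintro (u | ⟨e, w⟩) h
    · exact G.irrefl h
    · exact H.irrefl h.2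

/-- A cut vertex: a vertex whose removal disconnects the graph. -/
def IsCutVertex {V : Type*} (G : SimpleGraph V) (v : V) : Prop :=
  ¬ (G.induce {u | u ≠ v}).Connected

/-!
Upper bound: use `m + n` colours, one for each base vertex and one for each position `w` in
`K_n`, shared by the `w`-th vertices of all copies. Any two vertices are joined by a path whose
internal vertices are base vertices, so the colouring is rainbow. A base vertex is alone in its
colour class, so a rainbow code determines the colour, determines a base vertex, and determines
the distances to all base vertices, which separate copy vertices over different edges. Finally
`m + n ≤ 2m + n - 2`.

Lower bounds: a walk of `T ⋄ K_n` between base vertices projects to a walk of `T` through the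
same base vertices, so a rainbow vertex colouring of `T ⋄ K_n` restricts to one of `T`. For a
leaf `u` of `T` with neighbour `v`, the vertex `u` and the copy of `K_n` over `uv` are `n + 1`
pairwise closed twins. Closed twins of equal colour have equal rainbow codes, so these need
`n + 1` colours; with no further colour, `v` and the twin sharing its colour would both have
the code "`0` at the own colour, `1` elsewhere".
-/

namespace SimpleGraph.Walk

variable {V : Type*} {G : SimpleGraph V} {u v x : V}

lemma IsPath.mem_support_tail_dropLast_iff {p : G.Walk u v} (hp : p.IsPath) :
    x ∈ p.support.tail.dropLast ↔ x ∈ p.support ∧ x ≠ u ∧ x ≠ v := by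
  cases p with
  | nil => simp
  | cons h q =>
    have hnd := hp.support_nodup
    rw [support_cons, List.nodup_cons] at hnd
    rw [support_cons, List.tail_cons, List.mem_cons]
    rw [← List.dropLast_append_getLast q.support_ne_nil, getLast_support] at hnd ⊢
    grind

end SimpleGraph.Walk

section Rainbow

variable {V : Type*} {G : SimpleGraph V} {k : ℕ} {c : V → Fin k} {u v : V}

lemma isRainbowPath_iff_injOn {p : G.Walk u v} (hp : p.IsPath) :
    IsRainbowPath G c p ↔ Set.InjOn c {x | x ∈ p.support ∧ x ≠ u ∧ x ≠ v} := by
  have hnd : p.support.tail.dropLast.Nodup :=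
    hp.support_nodup.sublist ((List.dropLast_sublist _).trans (List.tail_sublist _))
  simp only [IsRainbowPath, hp, true_and, List.nodup_map_iff_inj_on hnd,
    hp.mem_support_tail_dropLast_iff]
  rfl

lemma exists_isRainbowPath_of_injOn (p : G.Walk u v)
    (hc : Set.InjOn c {x | x ∈ p.support ∧ x ≠ u ∧ x ≠ v}) :
    ∃ q : G.Walk u v, IsRainbowPath G c q := by
  classical
  refine ⟨p.bypass, (isRainbowPath_iff_injOn p.bypass_isPath).mpr (hc.mono ?_)⟩
  exact fun x ⟨hx, hxu, hxv⟩ => ⟨p.support_bypass_subset_support hx, hxu, hxv⟩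

lemma rvc_le_of_isRVColoring {k : ℕ} {c : V → Fin k} (hc : IsRVColoring G c) : rvc G ≤ k :=
  Nat.sInf_le ⟨c, hc⟩

lemma le_rvcl {N : ℕ} (hG : ∃ k, ∃ c : V → Fin k, IsLocatingRVColoring G c)
    (h : ∀ k (c : V → Fin k), IsLocatingRVColoring G c → N ≤ k) : N ≤ rvcl G :=
  le_csInf hG fun k ⟨c, hc⟩ => h k c hc

end Rainbow

section RainbowCode

variable {V : Type*} {G : SimpleGraph V} {k : ℕ} {c : V → Fin k}

lemma rainbowCode_apply_self (v : V) : rainbowCode G c v (c v) = 0 :=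
  Nat.sInf_eq_zero.mpr (Or.inl ⟨v, rfl, dist_self⟩)

lemma rainbowCode_eq_zero_iff (hG : G.Preconnected) {v : V} {i : Fin k} (hi : ∃ w, c w = i) :
    rainbowCode G c v i = 0 ↔ c v = i := by
  refine ⟨fun h => ?_, fun h => h ▸ rainbowCode_apply_self v⟩
  obtain ⟨w, hw⟩ := hi
  rcases Nat.sInf_eq_zero.mp h with ⟨y, hy, hd⟩ | hempty
  · rwa [(hG v y).dist_eq_zero_iff.mp hd]
  · exact (Set.eq_empty_iff_forall_notMem.mp hempty _ ⟨w, hw, rfl⟩).elim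

lemma color_eq_of_rainbowCode_eq (hG : G.Preconnected) {s t : V}
    (h : rainbowCode G c s = rainbowCode G c t) : c s = c t := by
  have hs := rainbowCode_apply_self (G := G) (c := c) s
  rw [h, rainbowCode_eq_zero_iff hG ⟨s, rfl⟩] at hs
  exact hs.symm

lemma rainbowCode_apply_of_forall_eq {x : V} (hx : ∀ y, c y = c x → y = x) (v : V) :
    rainbowCode G c v (c x) = G.dist v x := by
  have hset : {d | ∃ y, c y = c x ∧ G.dist v y = d} = {G.dist v x} := by
    ext d
    constructor
    · rintro ⟨y, hy, rfl⟩
      rw [hx y hy]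
      rfl
    · rintro rfl
      exact ⟨x, rfl, rfl⟩
  exact (congrArg sInf hset).trans (csInf_singleton _)

lemma rainbowCode_eq_of_forall_exists_adj (hG : G.Preconnected) {x : V}
    (h : ∀ i, i ≠ c x → ∃ y, G.Adj x y ∧ c y = i) :
    rainbowCode G c x = fun i => if i = c x then 0 else 1 := by
  funext i
  split_ifs with hi
  · exact hi ▸ rainbowCode_apply_self x
  · obtain ⟨y, hxy, hy⟩ := h i hi
    have hle : rainbowCode G c x i ≤ 1 := Nat.sInf_le ⟨y, hy, dist_eq_one_iff_adj.mpr hxy⟩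
    have hne : rainbowCode G c x i ≠ 0 :=
      fun h0 => hi ((rainbowCode_eq_zero_iff hG ⟨y, hy⟩).mp h0).symm
    omega

lemma dist_le_dist_of_neighborSet_subset (hG : G.Preconnected) {a b w : V}
    (h : G.neighborSet b ⊆ insert a (G.neighborSet a)) (hw : w ≠ b) :
    G.dist a w ≤ G.dist b w := by
  obtain ⟨p, hp⟩ := (hG b w).exists_walk_length_eq_dist
  cases p with
  | nil => exact absurd rfl hw
  | @cons _ x _ hbx q =>
    rw [Walk.length_cons] at hp
    rcases h hbx with rfl | hax
    · have := dist_le q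
      omega
    · have : G.dist a w ≤ q.length + 1 := dist_le (Walk.cons hax q)
      omega

lemma rainbowCode_eq_of_closedNbhd_eq (hG : G.Preconnected) {a b : V}
    (h : insert a (G.neighborSet a) = insert b (G.neighborSet b)) (hc : c a = c b) :
    rainbowCode G c a = rainbowCode G c b := by
  have hdist : ∀ w, w ≠ a → w ≠ b → G.dist a w = G.dist b w := fun w hwa hwb =>
    le_antisymm
      (dist_le_dist_of_neighborSet_subset hG ((Set.subset_insert _ _).trans h.ge) hwb)
      (dist_le_dist_of_neighborSet_subset hG ((Set.subset_insert _ _).trans h.le) hwa)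
  funext i
  by_cases hi : c a = i
  · subst hi
    rw [rainbowCode_apply_self, hc, rainbowCode_apply_self]
  · simp only [rainbowCode]
    congr 1
    ext d
    refine exists_congr fun w => and_congr_right fun hw => ?_
    rw [hdist w (by rintro rfl; exact hi hw) (by rintro rfl; exact hi (hc ▸ hw))]

lemma card_lt_of_forall_closedNbhd_eq (hG : G.Preconnected)
    (hc : Function.Injective (rainbowCode G c)) {K : Finset V} {x : V} (hx : x ∉ K)
    (hK : ∀ z ∈ K, insert z (G.neighborSet z) = insert x (K : Set V)) : K.card < k := by
  classical
  have hadj : ∀ z ∈ K, ∀ y, y ≠ z → (y = x ∨ y ∈ K) → G.Adj z y := fun z hz y hyz hy => by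
    have hy' : y ∈ insert z (G.neighborSet z) := (hK z hz).symm ▸ hy
    exact hy'.resolve_left hyz
  have hinj : Set.InjOn c K := fun a ha b hb hab =>
    hc (rainbowCode_eq_of_closedNbhd_eq hG ((hK a ha).trans (hK b hb).symm) hab)
  have hcard : (K.image c).card = K.card := Finset.card_image_of_injOn hinj
  refine lt_of_le_of_ne (by simpa [hcard] using (K.image c).card_le_univ) fun hk => ?_
  have himage : K.image c = Finset.univ :=
    Finset.eq_univ_of_card _ (by rw [hcard, hk, Fintype.card_fin])
  have hsurj : ∀ i, ∃ z ∈ K, c z = i := fun i =>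
    Finset.mem_image.mp (himage ▸ Finset.mem_univ i)
  obtain ⟨z, hz, hzx⟩ := hsurj (c x)
  have hxz : x ≠ z := fun h => hx (h ▸ hz)
  have hcode_x : rainbowCode G c x = fun i => if i = c x then 0 else 1 :=
    rainbowCode_eq_of_forall_exists_adj hG fun i _ => by
      obtain ⟨y, hy, rfl⟩ := hsurj i
      exact ⟨y, (hadj y hy x (fun h => hx (h ▸ hy)) (Or.inl rfl)).symm, rfl⟩
  have hcode_z : rainbowCode G c z = fun i => if i = c z then 0 else 1 :=
    rainbowCode_eq_of_forall_exists_adj hG fun i hi => by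
      obtain ⟨y, hy, rfl⟩ := hsurj i
      exact ⟨y, hadj z hz y (fun h => hi (h ▸ rfl)) (Or.inr hy), rfl⟩
  exact hxz (hc (by rw [hcode_x, hcode_z, hzx]))

end RainbowCode

namespace edgeCorona

variable {V W : Type*} {G : SimpleGraph V} {H : SimpleGraph W}

@[simp] lemma adj_inl_inl {u v : V} :
    (edgeCorona G H).Adj (.inl u) (.inl v) ↔ G.Adj u v := Iff.rfl

@[simp] lemma adj_inl_inr {u : V} {e : G.edgeSet} {w : W} :
    (edgeCorona G H).Adj (.inl u) (.inr (e, w)) ↔ u ∈ (e : Sym2 V) := Iff.rfl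

@[simp] lemma adj_inr_inl {u : V} {e : G.edgeSet} {w : W} :
    (edgeCorona G H).Adj (.inr (e, w)) (.inl u) ↔ u ∈ (e : Sym2 V) := Iff.rfl

@[simp] lemma adj_inr_inr {e e' : G.edgeSet} {w w' : W} :
    (edgeCorona G H).Adj (.inr (e, w)) (.inr (e', w')) ↔ e = e' ∧ H.Adj w w' := Iff.rfl

/-- The base vertices a vertex of `G ⋄ H` is, or hangs on; the diagonal `s(x, x)` stands for
`x` alone. -/
def anchor : V ⊕ (G.edgeSet × W) → Sym2 V
  | .inl x => s(x, x)
  | .inr (e, _) => e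

lemma eq_or_adj_of_mem_anchor {s : V ⊕ (G.edgeSet × W)} {a b : V} (ha : a ∈ anchor s)
    (hb : b ∈ anchor s) : a = b ∨ G.Adj a b := by
  rcases s with x | ⟨e, w⟩
  · simp only [anchor, Sym2.mem_iff, or_self] at ha hb
    exact Or.inl (ha.trans hb.symm)
  · by_cases hab : a = b
    · exact Or.inl hab
    · have he : (e : Sym2 V) = s(a, b) := (Sym2.mem_and_mem_iff hab).mp ⟨ha, hb⟩
      exact Or.inr (G.mem_edgeSet.mp (he ▸ e.2))

lemma exists_mem_anchor_of_adj {s t : V ⊕ (G.edgeSet × W)} (hst : (edgeCorona G H).Adj s t)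
    {u : V} (hu : u ∈ anchor s) : ∃ u' ∈ anchor t, u' = u ∨ (G.Adj u u' ∧ t = .inl u') := by
  rcases s with x | ⟨e, w⟩ <;> rcases t with y | ⟨e', w'⟩
  · simp only [anchor, Sym2.mem_iff, or_self] at hu
    exact ⟨y, Sym2.mem_mk_left y y, Or.inr ⟨hu ▸ hst, rfl⟩⟩
  · simp only [anchor, Sym2.mem_iff, or_self] at hu
    exact ⟨u, hu ▸ hst, Or.inl rfl⟩
  · refine ⟨y, Sym2.mem_mk_left y y, ?_⟩
    rcases eq_or_adj_of_mem_anchor hu (s := .inr (e, w)) (b := y) hst with h | h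
    · exact Or.inl h.symm
    · exact Or.inr ⟨h, rfl⟩
  · obtain ⟨rfl, -⟩ := hst
    exact ⟨u, hu, Or.inl rfl⟩

lemma exists_walk_support_subset_of_walk {s t : V ⊕ (G.edgeSet × W)}
    (p : (edgeCorona G H).Walk s t) {u v : V} (hu : u ∈ anchor s) (hv : v ∈ anchor t) :
    ∃ q : G.Walk u v, ∀ x ∈ q.support, x = u ∨ x = v ∨ .inl x ∈ p.support := by
  induction p generalizing u with
  | nil =>
    rcases eq_or_adj_of_mem_anchor hu hv with rfl | huv
    · exact ⟨.nil, by simp⟩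
    · exact ⟨huv.toWalk, by simp⟩
  | @cons s t' t hst q ih =>
    obtain ⟨u', hu', rfl | ⟨huu', rfl⟩⟩ := exists_mem_anchor_of_adj hst hu
    · obtain ⟨r, hr⟩ := ih hu' hv
      exact ⟨r, fun x hx => (hr x hx).imp_right (Or.imp_right (List.mem_cons_of_mem _))⟩
    · obtain ⟨r, hr⟩ := ih hu' hv
      refine ⟨.cons huu' r, fun x hx => ?_⟩
      rw [Walk.support_cons, List.mem_cons] at hx
      rcases hx with rfl | hx
      · exact Or.inl rfl
      · rcases hr x hx with rfl | rfl | hx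
        · simp
        · exact Or.inr (Or.inl rfl)
        · exact Or.inr (Or.inr (List.mem_cons_of_mem _ hx))

lemma isRVColoring_comp_inl {k : ℕ} {c : V ⊕ (G.edgeSet × W) → Fin k}
    (hc : IsRVColoring (edgeCorona G H) c) : IsRVColoring G (c ∘ Sum.inl) := by
  intro u v
  obtain ⟨p, hp⟩ := hc (.inl u) (.inl v)
  obtain ⟨q, hq⟩ :=
    exists_walk_support_subset_of_walk p (Sym2.mem_mk_left u u) (Sym2.mem_mk_left v v)
  refine exists_isRainbowPath_of_injOn q fun x ⟨hx, hxu, hxv⟩ y ⟨hy, hyu, hyv⟩ hxy => ?_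
  have hint : ∀ z, z ∈ q.support → z ≠ u → z ≠ v →
      (Sum.inl z : V ⊕ (G.edgeSet × W)) ∈ {y | y ∈ p.support ∧ y ≠ .inl u ∧ y ≠ .inl v} :=
    fun z hz hzu hzv => ⟨(((hq z hz).resolve_left hzu).resolve_left hzv), by simpa, by simpa⟩
  exact Sum.inl_injective ((isRainbowPath_iff_injOn hp.1).mp hp (hint x hx hxu hxv)
    (hint y hy hyu hyv) hxy)

def inlHom : G →g edgeCorona G H where
  toFun := Sum.inl
  map_rel' h := h

lemma exists_walk_to_inl (s : V ⊕ (G.edgeSet × W)) :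
    ∃ a, ∃ p : (edgeCorona G H).Walk s (.inl a), ∀ y ∈ p.support, y = s ∨ y = .inl a := by
  rcases s with x | ⟨e, w⟩
  · exact ⟨x, .nil, by simp⟩
  · have h : (edgeCorona G H).Adj (.inr (e, w)) (.inl (e : Sym2 V).out.1) :=
      Sym2.out_fst_mem (e : Sym2 V)
    exact ⟨_, h.toWalk, by simp⟩

lemma exists_walk_support_subset_range_inl (hG : G.Preconnected)
    (s t : V ⊕ (G.edgeSet × W)) :
    ∃ p : (edgeCorona G H).Walk s t, ∀ y ∈ p.support, y = s ∨ y = t ∨ y ∈ Set.range Sum.inl := by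
  obtain ⟨a, ps, hps⟩ := exists_walk_to_inl (H := H) s
  obtain ⟨b, pt, hpt⟩ := exists_walk_to_inl (H := H) t
  obtain ⟨P⟩ := hG a b
  obtain ⟨Q, hQ⟩ : ∃ Q : (edgeCorona G H).Walk (.inl a) (.inl b),
      ∀ y ∈ Q.support, y ∈ Set.range Sum.inl :=
    ⟨P.map inlHom, fun y hy => by
      obtain ⟨x, -, rfl⟩ := List.mem_map.mp ((P.support_map inlHom) ▸ hy)
      exact ⟨x, rfl⟩⟩
  refine ⟨ps.append (Q.append pt.reverse), fun y hy => ?_⟩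
  simp only [Walk.mem_support_append_iff, Walk.support_reverse, List.mem_reverse] at hy
  rcases hy with hy | hy | hy
  · rcases hps y hy with rfl | rfl <;> simp
  · exact Or.inr (Or.inr (hQ y hy))
  · rcases hpt y hy with rfl | rfl <;> simp

lemma connected (hG : G.Connected) : (edgeCorona G H).Connected :=
  have := hG.nonempty
  { preconnected := fun s t =>
      (exists_walk_support_subset_range_inl hG.preconnected s t).elim fun p _ => p.reachable
    nonempty := ⟨.inl (Classical.arbitrary V)⟩ }

lemma isRVColoring_of_injective_comp_inl (hG : G.Preconnected) {k : ℕ}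
    {c : V ⊕ (G.edgeSet × W) → Fin k} (hc : Function.Injective (c ∘ Sum.inl)) :
    IsRVColoring (edgeCorona G H) c := by
  intro s t
  obtain ⟨p, hp⟩ := exists_walk_support_subset_range_inl (H := H) hG s t
  refine exists_isRainbowPath_of_injOn p fun y ⟨hy, hys, hyt⟩ z ⟨hz, hzs, hzt⟩ hyz => ?_
  obtain ⟨x, rfl⟩ := ((hp y hy).resolve_left hys).resolve_left hyt
  obtain ⟨x', rfl⟩ := ((hp z hz).resolve_left hzs).resolve_left hzt
  exact congrArg Sum.inl (hc hyz)

lemma isLocatingRVColoring_comp_sumMap (hG : G.Connected) {k : ℕ} {κ : V ⊕ W → Fin k}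
    (hκ : Function.Injective κ) :
    IsLocatingRVColoring (edgeCorona G H) (κ ∘ Sum.map id Prod.snd) := by
  set c := κ ∘ Sum.map id Prod.snd
  have hconn := (connected (H := H) hG).preconnected
  refine ⟨isRVColoring_of_injective_comp_inl hG.preconnected
    (hκ.comp Sum.inl_injective), fun s t hst => ?_⟩
  have hdist : ∀ x, (edgeCorona G H).dist s (.inl x) = (edgeCorona G H).dist t (.inl x) := by
    intro x
    have hx : ∀ y, c y = c (.inl x) → y = .inl x := fun y hy => by
      rcases y with y | ⟨e, w⟩ <;> simp [c, hκ.eq_iff] at hy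
      exact congrArg Sum.inl hy
    rw [← rainbowCode_apply_of_forall_eq hx, ← rainbowCode_apply_of_forall_eq hx, hst]
  have hcol := hκ (color_eq_of_rainbowCode_eq hconn hst)
  rcases s with x | ⟨e, w⟩ <;> rcases t with y | ⟨e', w'⟩ <;>
    simp only [Sum.map_inl, Sum.map_inr, id_eq, Sum.inl.injEq, Sum.inr.injEq, reduceCtorEq] at hcol
  · rw [hcol]
  · subst hcol
    have hmem : ∀ x, x ∈ (e : Sym2 V) ↔ x ∈ (e' : Sym2 V) := fun x => by
      rw [← adj_inr_inl (H := H) (w := w), ← adj_inr_inl (H := H) (e := e') (w := w),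
        ← dist_eq_one_iff_adj, ← dist_eq_one_iff_adj, hdist]
    rw [Subtype.ext (Sym2.ext hmem)]

lemma rvcl_le [Fintype V] [Fintype W] (hG : G.Connected) :
    rvcl (edgeCorona G H) ≤ Fintype.card V + Fintype.card W :=
  Fintype.card_sum (α := V) (β := W) ▸
    Nat.sInf_le ⟨_, isLocatingRVColoring_comp_sumMap hG (Fintype.equivFin (V ⊕ W)).injective⟩

lemma closedNbhd_eq_of_leaf {u v : V} (huv : G.Adj u v) (hleaf : ∀ y, G.Adj u y → y = v)
    {z : V ⊕ (G.edgeSet × W)} (hz : z = .inl u ∨ ∃ w, z = .inr (⟨s(u, v), huv⟩, w)) :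
    insert z ((edgeCorona G (⊤ : SimpleGraph W)).neighborSet z) =
      {y | y = .inl v ∨ y = .inl u ∨ ∃ w, y = .inr (⟨s(u, v), huv⟩, w)} := by
  have hedge : ∀ e : G.edgeSet, u ∈ (e : Sym2 V) ↔ e = ⟨s(u, v), huv⟩ := fun e => by
    refine ⟨fun hu => ?_, fun h => h ▸ Sym2.mem_mk_left u v⟩
    obtain ⟨e, he⟩ := e
    obtain ⟨y, rfl⟩ := Sym2.mem_iff_exists.mp hu
    obtain rfl := hleaf y he
    rfl
  have hnbr : ∀ y, G.Adj u y ↔ y = v := fun y => ⟨hleaf y, fun h => h ▸ huv⟩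
  ext y
  rcases hz with rfl | ⟨w, rfl⟩ <;> rcases y with y | ⟨e, w'⟩ <;> simp [hedge, hnbr] <;> grind

lemma card_add_two_le_of_injective_rainbowCode [Fintype W] (hG : G.Connected) {u v : V}
    (huv : G.Adj u v) (hleaf : ∀ y, G.Adj u y → y = v) {k : ℕ}
    {c : V ⊕ (G.edgeSet × W) → Fin k}
    (hc : Function.Injective (rainbowCode (edgeCorona G (⊤ : SimpleGraph W)) c)) :
    Fintype.card W + 2 ≤ k := by
  classical
  set K : Finset (V ⊕ (G.edgeSet × W)) :=
    insert (.inl u) (Finset.univ.image fun w => .inr (⟨s(u, v), huv⟩, w))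
  have hK : K.card = Fintype.card W + 1 := by
    rw [Finset.card_insert_of_notMem (by simp), Finset.card_image_of_injective _
      (fun _ _ h => (Prod.mk.inj (Sum.inr_injective h)).2), Finset.card_univ]
  have hmem : ∀ z, z ∈ K ↔ z = .inl u ∨ ∃ w, z = .inr (⟨s(u, v), huv⟩, w) := fun z => by
    simp [K, eq_comm]
  have hlt := card_lt_of_forall_closedNbhd_eq (connected hG).preconnected hc (x := .inl v)
    (K := K) (by simp [hmem, huv.ne.symm]) fun z hz => by
      rw [closedNbhd_eq_of_leaf huv hleaf ((hmem z).mp hz)]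
      ext y
      simp [hmem]
  omega

end edgeCorona

theorem stmt10_general {V : Type*} [Fintype V] (T : SimpleGraph V) (n : ℕ)
    (hT : T.IsTree) (hm : 2 ≤ Fintype.card V) :
    max (rvc T) (n + 2) ≤ rvcl (edgeCorona T (⊤ : SimpleGraph (Fin n))) ∧
      rvcl (edgeCorona T (⊤ : SimpleGraph (Fin n))) ≤ 2 * Fintype.card V + n - 2 := by
  classical
  have hconn := hT.connected
  have : Nontrivial V := Fintype.one_lt_card_iff_nontrivial.mp hm
  obtain ⟨u, hu⟩ := hT.exists_vert_degree_one_of_nontrivial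
  obtain ⟨v, huv, hleaf⟩ := degree_eq_one_iff_existsUnique_adj.mp hu
  have hex : ∃ k, ∃ c : _ → Fin k,
      IsLocatingRVColoring (edgeCorona T (⊤ : SimpleGraph (Fin n))) c :=
    ⟨_, _, edgeCorona.isLocatingRVColoring_comp_sumMap hconn
      (Fintype.equivFin (V ⊕ Fin n)).injective⟩
  have hub := edgeCorona.rvcl_le (H := (⊤ : SimpleGraph (Fin n))) hconn
  rw [Fintype.card_fin] at hub
  refine ⟨max_le (le_rvcl hex fun k c hc => ?_) (le_rvcl hex fun k c hc => ?_), by omega⟩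
  · exact rvc_le_of_isRVColoring (edgeCorona.isRVColoring_comp_inl hc.1)
  · simpa using edgeCorona.card_add_two_le_of_injective_rainbowCode hconn huv hleaf hc.2

theorem stmt10 {V : Type*} [Fintype V] (T : SimpleGraph V) (n : ℕ)
    (hT : T.IsTree) (hm : 2 ≤ Fintype.card V) (hn : 2 ≤ n) :
    max (rvc T) (n + 2) ≤ rvcl (edgeCorona T (⊤ : SimpleGraph (Fin n))) ∧
      rvcl (edgeCorona T (⊤ : SimpleGraph (Fin n))) ≤ 2 * Fintype.card V + n - 2 :=
  stmt10_general T n hT hm
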